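/- arXiv:0806.0303 — 3 statements merged into one kernel-verified Lean document; each statement's English description precedes it below -/
import Mathlib

section
/- Let g ≥ 2 and V = (Fin (g+1) → ZMod 2). Under the right-composition action of O(V), the set of all linear forms on V is the disjoint union of exactly four orbits: the singleton {θ₀} where θ₀ : x ↦ 0, the singleton {θ₁} where θ₁ : x ↦ ∑_{i=0}^{g} x_i, the set orb₀ = {θ ≠ θ₀, θ₁ : ∑_{i=0}^{g} θ(e_i) = 0}, and the set orb₁ = {θ ≠ θ₀, θ₁ : ∑_{i=0}^{g} θ(e_i) = 1}. -/
/-!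
A linear form is `θ = ⟨v, ·⟩` for a unique vector `v`, and `θ ∘ T = ⟨T⁻¹ v, ·⟩` for an
isometry `T`, so the orbits of forms are the orbits of vectors; `θ₀` and `θ₁` correspond to `0`
and the all-ones vector `1`, and `∑ θ(eᵢ) = ∑ vᵢ`. Over `ZMod 2` we have
`⟨x, x⟩ = ∑ xᵢ = ⟨1, x⟩`, so every isometry fixes `0` and `1` and preserves the weight parity
`⟨v, v⟩`. Conversely, for isotropic `a` the transvection `x ↦ x + ⟨a, x⟩ a` is an isometry.
If `⟨v, v⟩ = ⟨w, w⟩` and `⟨v + w, v⟩ = 1`, the transvection by `v + w` sends `v` to `w`; if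
instead `⟨v + w, v⟩ = 0`, a transvection by `eᵢ + eⱼ`, where `i, j` separate both `v` and `w`
(possible as `v, w ∉ {0, 1}`), first moves `w` to a vector for which it is `1`.
-/

open Matrix

section Isometries

variable (R ι : Type*) [CommRing R] [Fintype ι]

def dotIsometryGroup : Subgroup ((ι → R) ≃ₗ[R] (ι → R)) where
  carrier := {T | ∀ x y, T x ⬝ᵥ T y = x ⬝ᵥ y}
  one_mem' _ _ := rfl
  mul_mem' hS hT x y := (hS _ _).trans (hT x y)
  inv_mem' {T} hT x y := by simpa using (hT (T.symm x) (T.symm y)).symm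

variable {R ι}

theorem dotProduct_apply_of_mem_dotIsometryGroup {T : (ι → R) ≃ₗ[R] (ι → R)}
    (hT : T ∈ dotIsometryGroup R ι) (v x : ι → R) : v ⬝ᵥ T x = T⁻¹ v ⬝ᵥ x := by
  simpa using hT (T⁻¹ v) x

theorem exists_mem_dotIsometryGroup_dotProduct_apply_iff {v w : ι → R} :
    (∃ T ∈ dotIsometryGroup R ι, ∀ x, w ⬝ᵥ x = v ⬝ᵥ T x) ↔
      ∃ T ∈ dotIsometryGroup R ι, T v = w := by
  have key : ∀ T ∈ dotIsometryGroup R ι, (∀ x, w ⬝ᵥ x = v ⬝ᵥ T x) ↔ T⁻¹ v = w := fun T hT => by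
    simp_rw [dotProduct_apply_of_mem_dotIsometryGroup hT, dotProduct_eq_iff, eq_comm]
  constructor
  · rintro ⟨T, hT, h⟩
    exact ⟨T⁻¹, inv_mem hT, (key T hT).1 h⟩
  · rintro ⟨S, hS, h⟩
    exact ⟨S⁻¹, inv_mem hS, (key _ (inv_mem hS)).2 (by rwa [inv_inv])⟩

def dotTransvection (a : ι → R) (ha : a ⬝ᵥ a = 0) : (ι → R) ≃ₗ[R] (ι → R) :=
  LinearEquiv.transvection (f := dotProductBilin R R a) (v := a) ha

theorem dotTransvection_apply {a : ι → R} (ha : a ⬝ᵥ a = 0) (x : ι → R) :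
    dotTransvection a ha x = x + (a ⬝ᵥ x) • a :=
  rfl

theorem dotTransvection_dotProduct {a : ι → R} (ha : a ⬝ᵥ a = 0) (x y : ι → R) :
    dotTransvection a ha x ⬝ᵥ y = x ⬝ᵥ y + (a ⬝ᵥ x) * (a ⬝ᵥ y) := by
  rw [dotTransvection_apply, add_dotProduct, smul_dotProduct, smul_eq_mul]

variable [CharP R 2]

theorem dotTransvection_mem_dotIsometryGroup {a : ι → R} (ha : a ⬝ᵥ a = 0) :
    dotTransvection a ha ∈ dotIsometryGroup R ι := fun x y => by
  rw [dotTransvection_apply, dotTransvection_apply]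
  simp only [add_dotProduct, dotProduct_add, smul_dotProduct, dotProduct_smul, smul_eq_mul, ha,
    dotProduct_comm x a]
  linear_combination (a ⬝ᵥ x * a ⬝ᵥ y) * CharTwo.two_eq_zero (R := R)

theorem exists_mem_dotIsometryGroup_apply_eq_of_add_dotProduct_eq_one {v w : ι → R}
    (hvw : v ⬝ᵥ v = w ⬝ᵥ w) (h : v ⬝ᵥ v + w ⬝ᵥ v = 1) :
    ∃ T ∈ dotIsometryGroup R ι, T v = w := by
  have ha : (v + w) ⬝ᵥ (v + w) = 0 := by
    rw [add_dotProduct, dotProduct_add, dotProduct_add, ← hvw, dotProduct_comm v w]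
    linear_combination (v ⬝ᵥ v + w ⬝ᵥ v) * CharTwo.two_eq_zero (R := R)
  refine ⟨dotTransvection (v + w) ha, dotTransvection_mem_dotIsometryGroup ha, ?_⟩
  rw [dotTransvection_apply, add_dotProduct, h, one_smul, ← add_assoc, ← two_smul R,
    CharTwo.two_eq_zero, zero_smul, zero_add]

end Isometries

theorem exists_ne_and_ne_of_exists_ne {ι α β : Type*} {v : ι → α} {w : ι → β}
    (hv : ∃ i j, v i ≠ v j) (hw : ∃ i j, w i ≠ w j) : ∃ i j, v i ≠ v j ∧ w i ≠ w j := by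
  obtain ⟨i, j, hvij⟩ := hv
  by_cases hwij : w i = w j
  swap
  · exact ⟨i, j, hvij, hwij⟩
  obtain ⟨k, hwk⟩ : ∃ k, w k ≠ w i := by
    obtain ⟨k, l, hwkl⟩ := hw
    by_contra! h
    exact hwkl ((h k).trans (h l).symm)
  by_cases hvk : v k = v i
  · exact ⟨j, k, fun h => hvij (hvk.symm.trans h.symm), fun h => hwk (h.symm.trans hwij.symm)⟩
  · exact ⟨i, k, Ne.symm hvk, Ne.symm hwk⟩

theorem exists_apply_ne_of_ne_zero_of_ne_one {ι : Type*} {v : ι → ZMod 2} (h0 : v ≠ 0)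
    (h1 : v ≠ 1) : ∃ i j, v i ≠ v j := by
  obtain ⟨i, hi⟩ := Function.ne_iff.mp h0
  obtain ⟨j, hj⟩ := Function.ne_iff.mp h1
  have two_values : ∀ a : ZMod 2, a ≠ 0 → a ≠ 1 → False := by decide
  exact ⟨i, j, fun h => two_values _ hi (h ▸ hj)⟩

section ZModTwo

variable {ι : Type*} [Fintype ι]

theorem dotProduct_self_eq_sum (v : ι → ZMod 2) : v ⬝ᵥ v = ∑ i, v i :=
  Finset.sum_congr rfl fun i _ => by generalize v i = a; revert a; decide

theorem sum_apply_of_mem_dotIsometryGroup {T : (ι → ZMod 2) ≃ₗ[ZMod 2] (ι → ZMod 2)}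
    (hT : T ∈ dotIsometryGroup (ZMod 2) ι) (v : ι → ZMod 2) : ∑ i, T v i = ∑ i, v i := by
  rw [← dotProduct_self_eq_sum, ← dotProduct_self_eq_sum, hT]

theorem apply_one_of_mem_dotIsometryGroup {T : (ι → ZMod 2) ≃ₗ[ZMod 2] (ι → ZMod 2)}
    (hT : T ∈ dotIsometryGroup (ZMod 2) ι) : T 1 = 1 :=
  dotProduct_eq _ _ fun u => by
    rw [dotProduct_comm, dotProduct_apply_of_mem_dotIsometryGroup hT, dotProduct_one,
      sum_apply_of_mem_dotIsometryGroup (inv_mem hT), one_dotProduct]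

variable [DecidableEq ι]

theorem exists_mem_dotIsometryGroup_apply_eq {v w : ι → ZMod 2} (hv0 : v ≠ 0) (hv1 : v ≠ 1)
    (hw0 : w ≠ 0) (hw1 : w ≠ 1) (hvw : v ⬝ᵥ v = w ⬝ᵥ w) :
    ∃ T ∈ dotIsometryGroup (ZMod 2) ι, T v = w := by
  by_cases h : v ⬝ᵥ v + w ⬝ᵥ v = 1
  · exact exists_mem_dotIsometryGroup_apply_eq_of_add_dotProduct_eq_one hvw h
  replace h : v ⬝ᵥ v + w ⬝ᵥ v = 0 := by
    revert h; generalize v ⬝ᵥ v + w ⬝ᵥ v = a; revert a; decide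
  obtain ⟨i, j, hvij, hwij⟩ := exists_ne_and_ne_of_exists_ne
    (exists_apply_ne_of_ne_zero_of_ne_one hv0 hv1) (exists_apply_ne_of_ne_zero_of_ne_one hw0 hw1)
  have add_eq_one : ∀ a b : ZMod 2, a ≠ b → a + b = 1 := by decide
  set b : ι → ZMod 2 := Pi.single i 1 + Pi.single j 1
  have hb : ∀ x, b ⬝ᵥ x = x i + x j := fun x => by
    rw [add_dotProduct, single_one_dotProduct, single_one_dotProduct]
  have hbb : b ⬝ᵥ b = 0 := by
    have hij : i ≠ j := fun hij => hvij (hij ▸ rfl)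
    rw [hb]
    simp only [b, Pi.add_apply, Pi.single_eq_same, Pi.single_eq_of_ne hij,
      Pi.single_eq_of_ne hij.symm]
    decide
  set t := dotTransvection b hbb
  have ht : t ∈ dotIsometryGroup (ZMod 2) ι := dotTransvection_mem_dotIsometryGroup hbb
  obtain ⟨T, hT, hTv⟩ := exists_mem_dotIsometryGroup_apply_eq_of_add_dotProduct_eq_one
    (w := t w) (hvw.trans (ht w w).symm) (by
      rw [dotTransvection_dotProduct, hb, hb, add_eq_one _ _ hvij, add_eq_one _ _ hwij]
      linear_combination h)
  refine ⟨t⁻¹ * T, mul_mem (inv_mem ht) hT, ?_⟩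
  rw [LinearEquiv.mul_apply, hTv, LinearEquiv.coe_inv, LinearEquiv.symm_apply_apply]

theorem exists_mem_dotIsometryGroup_apply_eq_iff {v w : ι → ZMod 2} :
    (∃ T ∈ dotIsometryGroup (ZMod 2) ι, T v = w) ↔ (v = 0 ∧ w = 0) ∨ (v = 1 ∧ w = 1) ∨
      (v ≠ 0 ∧ v ≠ 1 ∧ w ≠ 0 ∧ w ≠ 1 ∧ ∑ i, v i = ∑ i, w i) := by
  constructor
  · rintro ⟨T, hT, rfl⟩
    have h1 : T v = 1 ↔ v = 1 := T.injective.eq_iff' (apply_one_of_mem_dotIsometryGroup hT)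
    simp only [ne_eq, T.map_eq_zero_iff, h1, sum_apply_of_mem_dotIsometryGroup hT]
    tauto
  · rintro (⟨rfl, rfl⟩ | ⟨rfl, rfl⟩ | ⟨hv0, hv1, hw0, hw1, hvw⟩)
    · exact ⟨1, one_mem _, rfl⟩
    · exact ⟨1, one_mem _, rfl⟩
    · rw [← dotProduct_self_eq_sum, ← dotProduct_self_eq_sum] at hvw
      exact exists_mem_dotIsometryGroup_apply_eq hv0 hv1 hw0 hw1 hvw

theorem exists_ne_zero_ne_one_sum_eq (hι : 2 < Fintype.card ι) (b : ZMod 2) :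
    ∃ v : ι → ZMod 2, v ≠ 0 ∧ v ≠ 1 ∧ ∑ i, v i = b := by
  obtain ⟨i, j, k, hij, hik, hjk⟩ := Fintype.two_lt_card_iff.mp hι
  refine ⟨Pi.single i 1 + Pi.single j (b + 1), fun h => ?_, fun h => ?_, ?_⟩
  · simpa [hij.symm] using congrFun h i
  · simpa [hik.symm, hjk.symm] using congrFun h k
  · simp only [Pi.add_apply, Finset.sum_add_distrib, Finset.sum_pi_single', Finset.mem_univ,
      if_true]
    revert b; decide

end ZModTwo

theorem coe_dotProductEquiv_eq_sum_iff {R ι : Type*} [CommSemiring R] [Fintype ι] [DecidableEq ι]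
    {v : ι → R} : ⇑(dotProductEquiv R ι v) = (fun x => ∑ i, x i) ↔ v = 1 := by
  have h1 : (fun x : ι → R => ∑ i, x i) = ⇑(dotProductEquiv R ι 1) :=
    funext fun x => (one_dotProduct x).symm
  rw [h1, DFunLike.coe_fn_eq, (dotProductEquiv R ι).injective.eq_iff]

/-- For `g ≥ 2`, under the right-composition action of the orthogonal group, the set of
linear forms on `V = Fin (g+1) → ZMod 2` is the disjoint union of exactly four orbits:
`{θ₀}`, `{θ₁}`, `orb₀ = {θ ≠ θ₀, θ₁ | ∑ θ(eᵢ) = 0}` and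
`orb₁ = {θ ≠ θ₀, θ₁ | ∑ θ(eᵢ) = 1}`. -/
theorem four_orbits (g : ℕ) (hg : 2 ≤ g) :
    let V := Fin (g + 1) → ZMod 2
    let SameOrbit : (V →ₗ[ZMod 2] ZMod 2) → (V →ₗ[ZMod 2] ZMod 2) → Prop :=
      fun θ θ' => ∃ T : V ≃ₗ[ZMod 2] V,
        (∀ x y : V, ∑ i, T x i * T y i = ∑ i, x i * y i) ∧ ∀ x : V, θ' x = θ (T x)
    let S0 : Set (V →ₗ[ZMod 2] ZMod 2) := {θ | θ = 0}
    let S1 : Set (V →ₗ[ZMod 2] ZMod 2) := {θ | ⇑θ = fun x : V => ∑ i, x i}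
    let orb0 : Set (V →ₗ[ZMod 2] ZMod 2) :=
      {θ | θ ∉ S0 ∧ θ ∉ S1 ∧ ∑ i, θ (Pi.single i (1 : ZMod 2)) = 0}
    let orb1 : Set (V →ₗ[ZMod 2] ZMod 2) :=
      {θ | θ ∉ S0 ∧ θ ∉ S1 ∧ ∑ i, θ (Pi.single i (1 : ZMod 2)) = 1}
    -- the four sets cover all linear forms
    (∀ θ : V →ₗ[ZMod 2] ZMod 2, θ ∈ S0 ∨ θ ∈ S1 ∨ θ ∈ orb0 ∨ θ ∈ orb1) ∧
    -- they are pairwise disjoint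
    (S0 ∩ S1 = ∅) ∧ (S0 ∩ orb0 = ∅) ∧ (S0 ∩ orb1 = ∅) ∧
    (S1 ∩ orb0 = ∅) ∧ (S1 ∩ orb1 = ∅) ∧ (orb0 ∩ orb1 = ∅) ∧
    -- all four are nonempty
    S0.Nonempty ∧ S1.Nonempty ∧ orb0.Nonempty ∧ orb1.Nonempty ∧
    -- each of them is a single orbit: two forms are in the same orbit
    -- iff they belong to the same one of the four sets
    (∀ θ θ' : V →ₗ[ZMod 2] ZMod 2, SameOrbit θ θ' ↔
      ((θ ∈ S0 ∧ θ' ∈ S0) ∨ (θ ∈ S1 ∧ θ' ∈ S1) ∨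
       (θ ∈ orb0 ∧ θ' ∈ orb0) ∨ (θ ∈ orb1 ∧ θ' ∈ orb1))) := by
  intro V SameOrbit S0 S1 orb0 orb1
  let E : V ≃ₗ[ZMod 2] (V →ₗ[ZMod 2] ZMod 2) := dotProductEquiv (ZMod 2) (Fin (g + 1))
  have sameOrbit_iff : ∀ v w, SameOrbit (E v) (E w) ↔ ∃ T ∈ dotIsometryGroup (ZMod 2) _, T v = w :=
    fun v w => exists_mem_dotIsometryGroup_dotProduct_apply_iff
  have mem_S1 : ∀ v, (⇑(E v) = fun x : V => ∑ i, x i) ↔ v = 1 :=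
    fun v => coe_dotProductEquiv_eq_sum_iff
  have sum_single : ∀ v, ∑ i, E v (Pi.single i 1) = ∑ i, v i :=
    fun v => Finset.sum_congr rfl fun i _ => dotProduct_single_one v i
  simp only [Set.eq_empty_iff_forall_notMem, Set.Nonempty, Set.mem_inter_iff, E.surjective.forall,
    E.surjective.exists, sameOrbit_iff, exists_mem_dotIsometryGroup_apply_eq_iff, S0, S1, orb0, orb1,
    Set.mem_ofPred_eq, E.map_eq_zero_iff, mem_S1, sum_single]
  have sum_cases : ∀ v : V, ∑ i, v i = 0 ∨ ∑ i, v i = 1 := fun v => by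
    generalize ∑ i, v i = a; revert a; decide
  have eq_iff : ∀ a b : ZMod 2, a = b ↔ (a = 0 ∧ b = 0) ∨ (a = 1 ∧ b = 1) := by decide
  have hcard : 2 < Fintype.card (Fin (g + 1)) := by rw [Fintype.card_fin]; omega
  refine ⟨fun v => ?_, fun v h => zero_ne_one (h.1.symm.trans h.2), by tauto, by tauto, by tauto,
    by tauto, fun v h => zero_ne_one (h.1.2.2.symm.trans h.2.2.2), ⟨0, rfl⟩, ⟨1, rfl⟩,
    exists_ne_zero_ne_one_sum_eq hcard 0, exists_ne_zero_ne_one_sum_eq hcard 1, fun v w => ?_⟩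
  · rcases sum_cases v with hsum | hsum <;> tauto
  · rw [eq_iff]
    tauto
end

section
/- Let g ≥ 1, W = (Fin g → ZMod 2) with all-ones vector e = v_1 + ⋯ + v_g, and let H₁ = {x ∈ W : x ≠ 0, x ≠ e, ⟨x,e⟩ = 1}. The orthogonal group O(W) acts transitively on H₁: for all x, x' ∈ H₁ there exists T ∈ O(W) with T(x) = x'. -/
section Aux

variable {g : ℕ}

/-- The standard bilinear form. -/
def Bform (a b : Fin g → ZMod 2) : ZMod 2 := ∑ i, a i * b i

lemma zmod2_cases (a : ZMod 2) : a = 0 ∨ a = 1 := by revert a; decide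

lemma zmod2_mul_self (a : ZMod 2) : a * a = a := by revert a; decide

lemma zmod2_add_self (a : ZMod 2) : a + a = 0 := by revert a; decide

lemma Bform_comm (a b : Fin g → ZMod 2) : Bform a b = Bform b a := by
  simp [Bform, mul_comm]

lemma Bform_add_left (a b c : Fin g → ZMod 2) :
    Bform (a + b) c = Bform a c + Bform b c := by
  simp [Bform, add_mul, Finset.sum_add_distrib]

lemma Bform_add_right (a b c : Fin g → ZMod 2) :
    Bform a (b + c) = Bform a b + Bform a c := by
  simp [Bform, mul_add, Finset.sum_add_distrib]

lemma Bform_smul_left (c : ZMod 2) (a b : Fin g → ZMod 2) :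
    Bform (c • a) b = c * Bform a b := by
  simp [Bform, Finset.mul_sum, mul_assoc]

lemma Bform_smul_right (c : ZMod 2) (a b : Fin g → ZMod 2) :
    Bform a (c • b) = c * Bform a b := by
  simp [Bform, Finset.mul_sum]; congr 1; funext i; ring

lemma Bform_self (a e : Fin g → ZMod 2) (he : ∀ i, e i = 1) :
    Bform a a = Bform a e := by
  simp [Bform, zmod2_mul_self, he]

/-- The transvection `x ↦ x + ⟨x,v⟩ v` as a linear map. -/
def tmap (v : Fin g → ZMod 2) : (Fin g → ZMod 2) →ₗ[ZMod 2] (Fin g → ZMod 2) where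
  toFun x := x + Bform x v • v
  map_add' a b := by
    show (a + b) + Bform (a + b) v • v = (a + Bform a v • v) + (b + Bform b v • v)
    rw [Bform_add_left, add_smul]
    abel
  map_smul' c a := by
    simp only [RingHom.id_apply]
    rw [Bform_smul_left, mul_smul, smul_add]

lemma tmap_invol (v : Fin g → ZMod 2) (hv : Bform v v = 0) :
    Function.Involutive (tmap v) := by
  intro x
  show (x + Bform x v • v) + Bform (x + Bform x v • v) v • v = x
  rw [Bform_add_left, Bform_smul_left, hv, mul_zero, add_zero, add_assoc,
    ← add_smul, zmod2_add_self, zero_smul, add_zero]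

lemma Bform_tmap (v : Fin g → ZMod 2) (hv : Bform v v = 0) (a b : Fin g → ZMod 2) :
    Bform (tmap v a) (tmap v b) = Bform a b := by
  show Bform (a + Bform a v • v) (b + Bform b v • v) = Bform a b
  simp only [Bform_add_left, Bform_add_right, Bform_smul_left, Bform_smul_right,
    hv, mul_zero, add_zero]
  rw [Bform_comm v b, mul_comm (Bform b v) (Bform a v), add_assoc,
    zmod2_add_self, add_zero]

/-- A single transvection step: if `⟨x,e⟩ = ⟨y,e⟩ = 1` and `⟨x,y⟩ = 0`, there is
an orthogonal map sending `x` to `y`. -/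
lemma step (e x y : Fin g → ZMod 2) (he : ∀ i, e i = 1)
    (hxe : Bform x e = 1) (hye : Bform y e = 1) (hxy : Bform x y = 0) :
    ∃ T : (Fin g → ZMod 2) ≃ₗ[ZMod 2] (Fin g → ZMod 2),
      (∀ a b, Bform (T a) (T b) = Bform a b) ∧ T x = y := by
  have hv : Bform (x + y) (x + y) = 0 := by
    rw [Bform_self _ e he, Bform_add_left, hxe, hye, zmod2_add_self]
  refine ⟨LinearEquiv.ofInvolutive (tmap (x + y)) (tmap_invol _ hv),
    fun a b => Bform_tmap _ hv a b, ?_⟩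
  show x + Bform x (x + y) • (x + y) = y
  have hxx : x + x = 0 := funext fun i => zmod2_add_self _
  rw [Bform_add_right, hxy, add_zero, Bform_self _ e he, hxe, one_smul,
    ← add_assoc, hxx, zero_add]

lemma Bform_ind (i : Fin g) (f : Fin g → ZMod 2) :
    Bform (fun j => if j = i then 1 else 0) f = f i := by
  simp [Bform, ite_mul, Finset.sum_ite_eq']

end Aux

/-- For `g ≥ 1`, the orthogonal group of `W = Fin g → ZMod 2` acts transitively on
`H₁ = {x ∈ W | x ≠ 0, x ≠ e, ⟨x,e⟩ = 1}`, where `e = v₁ + ⋯ + v_g` is the all-ones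
vector. -/
theorem transitive_on_H1 (g : ℕ) (hg : 1 ≤ g)
    (e : Fin g → ZMod 2) (he : e = ∑ i, Pi.single i (1 : ZMod 2))
    (x x' : Fin g → ZMod 2)
    (hx : x ≠ 0 ∧ x ≠ e ∧ ∑ i, x i * e i = 1)
    (hx' : x' ≠ 0 ∧ x' ≠ e ∧ ∑ i, x' i * e i = 1) :
    ∃ T : (Fin g → ZMod 2) ≃ₗ[ZMod 2] (Fin g → ZMod 2),
      (∀ a b : Fin g → ZMod 2, ∑ i, T a i * T b i = ∑ i, a i * b i) ∧
      T x = x' := by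
  obtain ⟨hx0, hxe, hxB⟩ := hx
  obtain ⟨hx'0, hx'e, hx'B⟩ := hx'
  have he1 : ∀ i, e i = 1 := by
    intro i
    rw [he]
    simp [Finset.sum_apply, Pi.single_apply]
  have hxB' : Bform x e = 1 := hxB
  have hx'B' : Bform x' e = 1 := hx'B
  by_cases hxx' : x = x'
  · exact ⟨LinearEquiv.refl _ _, fun a b => rfl, hxx'⟩
  rcases zmod2_cases (Bform x x') with hc | hc
  · -- one transvection suffices
    obtain ⟨T, hT1, hT2⟩ := step e x x' he1 hxB' hx'B' hc
    exact ⟨T, hT1, hT2⟩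
  · -- need an intermediate vector y with ⟨y,e⟩=1, ⟨y,x⟩=0, ⟨y,x'⟩=0
    have key : ∃ y : Fin g → ZMod 2,
        Bform y e = 1 ∧ Bform y x = 0 ∧ Bform y x' = 0 := by
      by_cases hA : ∃ i, x i = 0 ∧ x' i = 0
      · obtain ⟨i, h1, h2⟩ := hA
        exact ⟨fun j => if j = i then 1 else 0,
          by rw [Bform_ind]; exact he1 i,
          by rw [Bform_ind]; exact h1,
          by rw [Bform_ind]; exact h2⟩
      · push_neg at hA
        -- i₃ with x i₃ = 1 = x' i₃
        have h3 : ∃ i, x i = 1 ∧ x' i = 1 := by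
          by_contra h
          push_neg at h
          have : ∀ i, x i * x' i = 0 := by
            intro i
            rcases zmod2_cases (x i) with h0 | h1
            · rw [h0, zero_mul]
            · rw [h1, one_mul]
              rcases zmod2_cases (x' i) with h0' | h1'
              · exact h0'
              · exact absurd h1' (h i h1)
          rw [show Bform x x' = (0 : ZMod 2) by simp [Bform, this]] at hc
          exact absurd hc.symm one_ne_zero
        obtain ⟨i₃, h3x, h3x'⟩ := h3
        -- i₁ with x i₁ = 1, x' i₁ = 0
        have h1 : ∃ i, x i = 1 ∧ x' i = 0 := by
          have : ∃ i, x' i ≠ 1 := by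
            by_contra h
            push_neg at h
            exact hx'e (funext fun i => (h i).trans (he1 i).symm)
          obtain ⟨i, hi⟩ := this
          have hx'i : x' i = 0 := (zmod2_cases (x' i)).resolve_right hi
          have hxi : x i = 1 := by
            rcases zmod2_cases (x i) with h0 | h1
            · exact absurd hx'i (hA i h0)
            · exact h1
          exact ⟨i, hxi, hx'i⟩
        obtain ⟨i₁, h1x, h1x'⟩ := h1
        -- i₂ with x i₂ = 0, x' i₂ = 1
        have h2 : ∃ i, x i = 0 ∧ x' i = 1 := by
          have : ∃ i, x i ≠ 1 := by
            by_contra h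
            push_neg at h
            exact hxe (funext fun i => (h i).trans (he1 i).symm)
          obtain ⟨i, hi⟩ := this
          have hxi : x i = 0 := (zmod2_cases (x i)).resolve_right hi
          have hx'i : x' i = 1 := by
            rcases zmod2_cases (x' i) with h0 | h1
            · exact absurd h0 (hA i hxi)
            · exact h1
          exact ⟨i, hxi, hx'i⟩
        obtain ⟨i₂, h2x, h2x'⟩ := h2
        refine ⟨(fun j => if j = i₁ then 1 else 0) + (fun j => if j = i₂ then 1 else 0)
          + (fun j => if j = i₃ then 1 else 0), ?_, ?_, ?_⟩
        · rw [Bform_add_left, Bform_add_left, Bform_ind, Bform_ind, Bform_ind,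
            he1, he1, he1]
          decide
        · rw [Bform_add_left, Bform_add_left, Bform_ind, Bform_ind, Bform_ind,
            h1x, h2x, h3x]
          decide
        · rw [Bform_add_left, Bform_add_left, Bform_ind, Bform_ind, Bform_ind,
            h1x', h2x', h3x']
          decide
    obtain ⟨y, hye, hyx, hyx'⟩ := key
    obtain ⟨T₁, hT₁o, hT₁x⟩ := step e x y he1 hxB' hye (by rw [Bform_comm]; exact hyx)
    obtain ⟨T₂, hT₂o, hT₂y⟩ := step e y x' he1 hye hx'B' hyx'
    refine ⟨T₁.trans T₂, fun a b => ?_, ?_⟩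
    · show Bform (T₂ (T₁ a)) (T₂ (T₁ b)) = Bform a b
      rw [hT₂o, hT₁o]
    · show T₂ (T₁ x) = x'
      rw [hT₁x, hT₂y]
end

section
/- Let g ≥ 1 and V = (Fin (g+1) → ZMod 2). Every element of the subgroup Iso_{α₀} = {F ∈ O(V) : F(e_0 + e_1) = e_0 + e_1} is a product of the following elements: (i) elements of O(V) that preserve both the subspace span{e_0, e_1} and the subspace span{e_2, …, e_g} (i.e. block elements of O(Z₂²) × O(Z₂^{g-1})), and (ii) when g ≥ 3, the transvection T_u : x ↦ x + ⟨x,u⟩·u with u = e_0 + e_1 + e_2 + e_3. In other words, Iso_{α₀} is generated by these elements. -/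
/-- The orthogonal group of `Fin n → ZMod 2` for the standard bilinear form
`⟨x,y⟩ = ∑ i, x i * y i`, as a subgroup of the group of linear automorphisms. -/
def OrthGroup (n : ℕ) : Subgroup ((Fin n → ZMod 2) ≃ₗ[ZMod 2] (Fin n → ZMod 2)) where
  carrier := {T | ∀ x y : Fin n → ZMod 2, ∑ i, T x i * T y i = ∑ i, x i * y i}
  one_mem' := by intro x y; rfl
  mul_mem' := by
    intro a b ha hb x y
    exact (ha (b x) (b y)).trans (hb x y)
  inv_mem' := by
    intro a ha x y
    have h := ha (a.symm x) (a.symm y)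
    simp only [LinearEquiv.apply_symm_apply] at h
    exact h.symm

/-- The block elements of `O(Z₂²) × O(Z₂^{g-1})`: orthogonal automorphisms of
`Fin (g+1) → ZMod 2` preserving both `span{e₀, e₁} = {x | x i = 0 for i ≥ 2}` and
`span{e₂, …, e_g} = {x | x 0 = 0 ∧ x 1 = 0}`. -/
def BlockSet (g : ℕ) :
    Set ((Fin (g + 1) → ZMod 2) ≃ₗ[ZMod 2] (Fin (g + 1) → ZMod 2)) :=
  {F | F ∈ OrthGroup (g + 1) ∧
    (∀ x : Fin (g + 1) → ZMod 2, (∀ i : Fin (g + 1), 2 ≤ (i : ℕ) → x i = 0) →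
      ∀ i : Fin (g + 1), 2 ≤ (i : ℕ) → F x i = 0) ∧
    (∀ x : Fin (g + 1) → ZMod 2, x 0 = 0 → x 1 = 0 → F x 0 = 0 ∧ F x 1 = 0)}

/-- The vector `u = e₀ + e₁ + e₂ + e₃` of `Fin (g+1) → ZMod 2`. -/
def u0123 (g : ℕ) : Fin (g + 1) → ZMod 2 :=
  Pi.single 0 1 + Pi.single 1 1 + Pi.single 2 1 + Pi.single 3 1

/-- When `g ≥ 3`, the transvection `T_u : x ↦ x + ⟨x,u⟩ • u` with `u = e₀+e₁+e₂+e₃`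
(as a subset of the linear automorphisms of `Fin (g+1) → ZMod 2`). -/
def Transvection0123 (g : ℕ) :
    Set ((Fin (g + 1) → ZMod 2) ≃ₗ[ZMod 2] (Fin (g + 1) → ZMod 2)) :=
  {F | 3 ≤ g ∧ ∀ x : Fin (g + 1) → ZMod 2,
    F x = x + (∑ i, x i * u0123 g i) • u0123 g}

namespace StabAux

variable {g : ℕ}

/-- The standard bilinear form. -/
def bf (x y : Fin (g+1) → ZMod 2) : ZMod 2 := ∑ i, x i * y i

lemma bf_comm (x y : Fin (g+1) → ZMod 2) : bf x y = bf y x := by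
  unfold bf; exact Finset.sum_congr rfl fun i _ => mul_comm _ _

lemma bf_add_left (x y z : Fin (g+1) → ZMod 2) : bf (x + y) z = bf x z + bf y z := by
  unfold bf
  rw [← Finset.sum_add_distrib]
  exact Finset.sum_congr rfl fun i _ => by simp [add_mul]

lemma bf_add_right (x y z : Fin (g+1) → ZMod 2) : bf x (y + z) = bf x y + bf x z := by
  rw [bf_comm, bf_add_left, bf_comm y x, bf_comm z x]

lemma bf_smul_left (c : ZMod 2) (x y : Fin (g+1) → ZMod 2) : bf (c • x) y = c * bf x y := by
  unfold bf
  rw [Finset.mul_sum]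
  exact Finset.sum_congr rfl fun i _ => by simp [mul_assoc]

lemma bf_smul_right (c : ZMod 2) (x y : Fin (g+1) → ZMod 2) : bf x (c • y) = c * bf x y := by
  rw [bf_comm, bf_smul_left, bf_comm]

lemma bf_single_left (i : Fin (g+1)) (y : Fin (g+1) → ZMod 2) :
    bf (Pi.single i 1) y = y i := by
  unfold bf; simp [Pi.single_apply, ite_mul]

lemma bf_single_right (i : Fin (g+1)) (y : Fin (g+1) → ZMod 2) :
    bf y (Pi.single i 1) = y i := by
  rw [bf_comm, bf_single_left]

lemma zmod2_mul_self (a : ZMod 2) : a * a = a := by revert a; decide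

lemma zmod2_add_self (a : ZMod 2) : a + a = 0 := by revert a; decide

lemma zmod2_ne_zero {a : ZMod 2} (h : a ≠ 0) : a = 1 := by revert a; decide

lemma vadd_self (x : Fin (g+1) → ZMod 2) : x + x = 0 := by
  funext k; exact zmod2_add_self (x k)

lemma bf_self (x : Fin (g+1) → ZMod 2) : bf x x = ∑ i, x i :=
  Finset.sum_congr rfl fun i _ => zmod2_mul_self (x i)

lemma sum_single (i : Fin (g+1)) : ∑ k, (Pi.single i 1 : Fin (g+1) → ZMod 2) k = 1 := by
  simp [Pi.single_apply]

/-- The transvection as a linear map. -/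
def tvL (a : Fin (g+1) → ZMod 2) : (Fin (g+1) → ZMod 2) →ₗ[ZMod 2] (Fin (g+1) → ZMod 2) where
  toFun x := x + bf x a • a
  map_add' x y := by
    show (x + y) + bf (x + y) a • a = (x + bf x a • a) + (y + bf y a • a)
    rw [bf_add_left, add_smul]; abel
  map_smul' c x := by
    show (c • x) + bf (c • x) a • a = c • (x + bf x a • a)
    rw [bf_smul_left, mul_smul]; simp [smul_add]

lemma tvL_tvL (a : Fin (g+1) → ZMod 2) (ha : bf a a = 0) (x : Fin (g+1) → ZMod 2) :
    tvL a (tvL a x) = x := by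
  show (x + bf x a • a) + bf (x + bf x a • a) a • a = x
  rw [bf_add_left, bf_smul_left, ha, mul_zero, add_zero, add_assoc, ← add_smul,
    zmod2_add_self, zero_smul, add_zero]

/-- The transvection as a linear equivalence. -/
def tv (a : Fin (g+1) → ZMod 2) (ha : bf a a = 0) :
    (Fin (g+1) → ZMod 2) ≃ₗ[ZMod 2] (Fin (g+1) → ZMod 2) :=
  LinearEquiv.ofLinear (tvL a) (tvL a)
    (LinearMap.ext fun x => tvL_tvL a ha x) (LinearMap.ext fun x => tvL_tvL a ha x)

lemma tv_apply (a : Fin (g+1) → ZMod 2) (ha : bf a a = 0) (x : Fin (g+1) → ZMod 2) :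
    tv a ha x = x + bf x a • a := rfl

lemma tv_congr {a b : Fin (g+1) → ZMod 2} (ha : bf a a = 0) (hb : bf b b = 0)
    (h : a = b) : tv a ha = tv b hb := by subst h; rfl


lemma mem_orth_iff (F : (Fin (g+1) → ZMod 2) ≃ₗ[ZMod 2] (Fin (g+1) → ZMod 2)) :
    F ∈ OrthGroup (g+1) ↔ ∀ x y, bf (F x) (F y) = bf x y := Iff.rfl

lemma mem_orth_of_formula {F : (Fin (g+1) → ZMod 2) ≃ₗ[ZMod 2] (Fin (g+1) → ZMod 2)}
    (a : Fin (g+1) → ZMod 2) (ha : bf a a = 0)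
    (hF : ∀ x, F x = x + bf x a • a) : F ∈ OrthGroup (g+1) := by
  rw [mem_orth_iff]
  intro x y
  rw [hF x, hF y]
  simp only [bf_add_left, bf_add_right, bf_smul_left, bf_smul_right, ha]
  rw [bf_comm a y]
  generalize bf x y = U
  generalize bf x a = P
  generalize bf y a = Q
  revert U P Q; decide

lemma tv_mem_orth (a : Fin (g+1) → ZMod 2) (ha : bf a a = 0) :
    tv a ha ∈ OrthGroup (g+1) :=
  mem_orth_of_formula a ha (tv_apply a ha)

lemma tv_conj (a c : Fin (g+1) → ZMod 2) (ha : bf a a = 0) (hc : bf c c = 0)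
    (h' : bf (a + bf a c • c) (a + bf a c • c) = 0) :
    tv c hc * tv a ha * tv c hc = tv (a + bf a c • c) h' := by
  apply LinearEquiv.ext; intro x
  show tv c hc (tv a ha (tv c hc x)) = tv (a + bf a c • c) h' x
  simp only [tv_apply]
  simp only [bf_add_left, bf_add_right, bf_smul_left, bf_smul_right, ha, hc]
  simp only [bf_comm c a]
  funext k
  simp only [Pi.add_apply, Pi.smul_apply, smul_eq_mul]
  generalize bf x c = P
  generalize bf x a = Q
  generalize bf a c = M
  generalize x k = X
  generalize a k = A
  generalize c k = C
  revert P Q M X A C; decide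


lemma val1 (hg : 1 ≤ g) : ((1 : Fin (g+1)) : ℕ) = 1 := by
  have h : ((1 : Fin (g+1)) : ℕ) = 1 % (g+1) := rfl
  rw [h, Nat.mod_eq_of_lt (by omega)]

lemma fin_cases3 (hg : 1 ≤ g) (k : Fin (g+1)) : k = 0 ∨ k = 1 ∨ 2 ≤ (k : ℕ) := by
  by_cases h2 : 2 ≤ (k:ℕ)
  · exact Or.inr (Or.inr h2)
  · push_neg at h2
    interval_cases h : (k : ℕ)
    · exact Or.inl (Fin.ext (by simpa using h))
    · exact Or.inr (Or.inl (Fin.ext (by rw [val1 hg]; simpa using h)))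

lemma ne0_of_two_le {k : Fin (g+1)} (h : 2 ≤ (k:ℕ)) : k ≠ 0 := by
  intro h0; rw [h0] at h; simp at h

lemma ne1_of_two_le (hg : 1 ≤ g) {k : Fin (g+1)} (h : 2 ≤ (k:ℕ)) : k ≠ 1 := by
  intro h0; rw [h0, val1 hg] at h; omega

lemma zero_ne_one' (hg : 1 ≤ g) : (0 : Fin (g+1)) ≠ 1 := by
  intro h; have := congrArg Fin.val h; rw [val1 hg] at this; simp at this

/-- The distinguished vector `v = e₀ + e₁`. -/
def vv (g : ℕ) : Fin (g+1) → ZMod 2 := Pi.single 0 1 + Pi.single 1 1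

lemma vv_apply0 (hg : 1 ≤ g) : vv g 0 = 1 := by
  unfold vv
  rw [Pi.add_apply, Pi.single_eq_same, Pi.single_eq_of_ne (zero_ne_one' hg), add_zero]

lemma vv_apply1 (hg : 1 ≤ g) : vv g 1 = 1 := by
  unfold vv
  rw [Pi.add_apply, Pi.single_eq_same, Pi.single_eq_of_ne (Ne.symm (zero_ne_one' hg)), zero_add]

lemma vv_apply_ge (hg : 1 ≤ g) {k : Fin (g+1)} (h : 2 ≤ (k:ℕ)) : vv g k = 0 := by
  unfold vv
  rw [Pi.add_apply, Pi.single_eq_of_ne (ne0_of_two_le h),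
    Pi.single_eq_of_ne (ne1_of_two_le hg h), add_zero]

lemma bf_vv_right (x : Fin (g+1) → ZMod 2) : bf x (vv g) = x 0 + x 1 := by
  unfold vv
  rw [bf_add_right, bf_single_right, bf_single_right]

lemma bf_vv_vv (hg : 1 ≤ g) : bf (vv g) (vv g) = 0 := by
  rw [bf_vv_right, vv_apply0 hg, vv_apply1 hg]; decide

lemma tv_mem_block (hg : 1 ≤ g) (a : Fin (g+1) → ZMod 2) (ha : bf a a = 0)
    (h : (∀ k : Fin (g+1), 2 ≤ (k:ℕ) → a k = 0) ∨ (a 0 = 0 ∧ a 1 = 0)) :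
    tv a ha ∈ BlockSet g := by
  refine ⟨tv_mem_orth a ha, ?_, ?_⟩
  · intro x hx i hi
    rw [tv_apply]
    simp only [Pi.add_apply, Pi.smul_apply, smul_eq_mul]
    rcases h with h | h
    · rw [hx i hi, h i hi, mul_zero, add_zero]
    · have hbf : bf x a = 0 := by
        apply Finset.sum_eq_zero; intro k _
        rcases fin_cases3 hg k with rfl | rfl | h2
        · rw [h.1, mul_zero]
        · rw [h.2, mul_zero]
        · rw [hx k h2, zero_mul]
      rw [hx i hi, hbf, zero_mul, add_zero]
  · intro x h0 h1
    rw [tv_apply]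
    simp only [Pi.add_apply, Pi.smul_apply, smul_eq_mul]
    rcases h with h | h
    · have hbf : bf x a = 0 := by
        apply Finset.sum_eq_zero; intro k _
        rcases fin_cases3 hg k with rfl | rfl | h2
        · rw [h0, zero_mul]
        · rw [h1, zero_mul]
        · rw [h k h2, mul_zero]
      constructor <;> simp [h0, h1, hbf]
    · constructor <;> simp [h0, h1, h.1, h.2]

/-- The stabilizer as a subgroup. -/
def stabSub (g : ℕ) : Subgroup ((Fin (g+1) → ZMod 2) ≃ₗ[ZMod 2] (Fin (g+1) → ZMod 2)) where
  carrier := {F | F ∈ OrthGroup (g+1) ∧ F (vv g) = vv g}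
  one_mem' := ⟨one_mem _, rfl⟩
  mul_mem' := by
    rintro a b ⟨ha1, ha2⟩ ⟨hb1, hb2⟩
    refine ⟨mul_mem ha1 hb1, ?_⟩
    show a (b (vv g)) = vv g
    rw [hb2, ha2]
  inv_mem' := by
    rintro a ⟨h1, h2⟩
    refine ⟨inv_mem h1, ?_⟩
    show a.symm (vv g) = vv g
    rw [LinearEquiv.symm_apply_eq, h2]


lemma fin_ne_of_val_ne {a b : Fin (g+1)} (h : (a:ℕ) ≠ (b:ℕ)) : a ≠ b :=
  fun e => h (congrArg Fin.val e)

lemma val2 (h3 : 3 ≤ g) : ((2 : Fin (g+1)) : ℕ) = 2 := by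
  have h : ((2 : Fin (g+1)) : ℕ) = 2 % (g+1) := rfl
  rw [h, Nat.mod_eq_of_lt (by omega)]

lemma val3 (h3 : 3 ≤ g) : ((3 : Fin (g+1)) : ℕ) = 3 := by
  have h : ((3 : Fin (g+1)) : ℕ) = 3 % (g+1) := rfl
  rw [h, Nat.mod_eq_of_lt (by omega)]

lemma sum_eq_first_two (hg : 1 ≤ g) (f : Fin (g+1) → ZMod 2)
    (hf : ∀ k : Fin (g+1), 2 ≤ (k:ℕ) → f k = 0) : ∑ k, f k = f 0 + f 1 := by
  rw [← Finset.sum_pair (zero_ne_one' hg)]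
  apply (Finset.sum_subset (Finset.subset_univ _) ?_).symm
  intro k _ hk
  rcases fin_cases3 hg k with rfl | rfl | h2
  · simp at hk
  · simp at hk
  · exact hf k h2

lemma zmod2_eq_of_add_zero {A B : ZMod 2} (h : A + B = 0) : B = A := by
  revert A B; decide

lemma block_mem_stab (hg : 1 ≤ g) {F : (Fin (g+1) → ZMod 2) ≃ₗ[ZMod 2] (Fin (g+1) → ZMod 2)}
    (hF : F ∈ BlockSet g) : F ∈ stabSub g := by
  obtain ⟨hO, h2, _⟩ := hF
  refine ⟨hO, ?_⟩
  show F (vv g) = vv g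
  have hxk : ∀ k : Fin (g+1), 2 ≤ (k:ℕ) → F (vv g) k = 0 :=
    h2 (vv g) (fun k hk => vv_apply_ge hg hk)
  have hbfx : bf (F (vv g)) (F (vv g)) = bf (vv g) (vv g) := hO (vv g) (vv g)
  rw [bf_vv_vv hg, bf_self, sum_eq_first_two hg _ hxk] at hbfx
  have heq : F (vv g) 1 = F (vv g) 0 := zmod2_eq_of_add_zero hbfx
  have hx0 : F (vv g) 0 = 1 := by
    by_contra hne
    have hx00 : F (vv g) 0 = 0 := by
      revert hne; generalize F (vv g) 0 = A; revert A; decide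
    have hz : F (vv g) = 0 := by
      funext k
      rcases fin_cases3 hg k with rfl | rfl | hk2
      · simpa using hx00
      · rw [heq]; simpa using hx00
      · simpa using hxk k hk2
    have hv0 : vv g = 0 := by
      have := F.map_eq_zero_iff.mp hz
      exact this
    have := congrFun hv0 0
    rw [vv_apply0 hg] at this
    simp at this
  funext k
  rcases fin_cases3 hg k with rfl | rfl | hk2
  · rw [hx0, vv_apply0 hg]
  · rw [heq, hx0, vv_apply1 hg]
  · rw [hxk k hk2, vv_apply_ge hg hk2]

lemma u_decomp : u0123 g = vv g + Pi.single 2 1 + Pi.single 3 1 := rfl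

lemma single_facts (h3 : 3 ≤ g) :
    vv g 2 = 0 ∧ vv g 3 = 0 ∧ (Pi.single 2 1 : Fin (g+1) → ZMod 2) 2 = 1 ∧
    (Pi.single 3 1 : Fin (g+1) → ZMod 2) 3 = 1 ∧
    (Pi.single 2 1 : Fin (g+1) → ZMod 2) 3 = 0 ∧
    (Pi.single 3 1 : Fin (g+1) → ZMod 2) 2 = 0 := by
  have hg : 1 ≤ g := by omega
  refine ⟨vv_apply_ge hg (by rw [val2 h3]), vv_apply_ge hg (by rw [val3 h3]; omega),
    by rw [Pi.single_eq_same], by rw [Pi.single_eq_same],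
    by apply Pi.single_eq_of_ne; exact fin_ne_of_val_ne (by rw [val2 h3, val3 h3]; omega),
    by apply Pi.single_eq_of_ne; exact fin_ne_of_val_ne (by rw [val2 h3, val3 h3]; omega)⟩

lemma bf_u_u (h3 : 3 ≤ g) : bf (u0123 g) (u0123 g) = 0 := by
  have hg : 1 ≤ g := by omega
  obtain ⟨f1, f2, f3, f4, f5, f6⟩ := single_facts h3
  simp only [u_decomp, bf_add_left, bf_add_right, bf_vv_vv hg, bf_single_left,
    bf_single_right, Pi.add_apply, f1, f2, f3, f4, f5, f6]
  decide

lemma bf_vv_u (h3 : 3 ≤ g) : bf (vv g) (u0123 g) = 0 := by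
  have hg : 1 ≤ g := by omega
  obtain ⟨f1, f2, _, _, _, _⟩ := single_facts h3
  simp only [u_decomp, bf_add_right, bf_vv_vv hg, bf_single_right, f1, f2]
  decide

lemma trans_mem_stab {F : (Fin (g+1) → ZMod 2) ≃ₗ[ZMod 2] (Fin (g+1) → ZMod 2)}
    (hF : F ∈ Transvection0123 g) : F ∈ stabSub g := by
  obtain ⟨h3, hform⟩ := hF
  have hform' : ∀ x, F x = x + bf x (u0123 g) • u0123 g := hform
  refine ⟨mem_orth_of_formula (u0123 g) (bf_u_u h3) hform', ?_⟩
  show F (vv g) = vv g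
  rw [hform' (vv g), bf_vv_u h3, zero_smul, add_zero]

/-- The subgroup generated by the generators. -/
def HH (g : ℕ) : Subgroup ((Fin (g+1) → ZMod 2) ≃ₗ[ZMod 2] (Fin (g+1) → ZMod 2)) :=
  Subgroup.closure (BlockSet g ∪ Transvection0123 g)

lemma hh_le_stab (hg : 1 ≤ g) : HH g ≤ stabSub g := by
  apply Subgroup.closure_le _ |>.mpr
  rintro F (hF | hF)
  · exact block_mem_stab hg hF
  · exact trans_mem_stab hF


set_option linter.unusedVariables false in
lemma sse (k : Fin (g+1)) : (Pi.single k 1 : Fin (g+1) → ZMod 2) k = 1 := by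
  rw [Pi.single_eq_same]

lemma sne {k l : Fin (g+1)} (h : k ≠ l) : (Pi.single l 1 : Fin (g+1) → ZMod 2) k = 0 :=
  Pi.single_eq_of_ne h 1

lemma bf_pair_self (i j : Fin (g+1)) :
    bf (Pi.single i 1 + Pi.single j 1) (Pi.single i 1 + Pi.single j 1) = 0 := by
  rw [bf_self]
  simp only [Pi.add_apply]
  rw [Finset.sum_add_distrib, sum_single, sum_single]
  decide

lemma bf_w4_self (i j : Fin (g+1)) :
    bf (vv g + Pi.single i 1 + Pi.single j 1) (vv g + Pi.single i 1 + Pi.single j 1) = 0 := by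
  rw [bf_self]
  unfold vv
  simp only [Pi.add_apply]
  rw [Finset.sum_add_distrib, Finset.sum_add_distrib, Finset.sum_add_distrib,
    sum_single, sum_single, sum_single, sum_single]
  decide

lemma tvT_mem (h3 : 3 ≤ g) : tv (u0123 g) (bf_u_u h3) ∈ HH g :=
  Subgroup.subset_closure (Or.inr ⟨h3, fun _ => rfl⟩)

lemma tvU_mem (h3 : 3 ≤ g) :
    tv (vv g + Pi.single 2 1 + Pi.single 3 1) (bf_w4_self 2 3) ∈ HH g := by
  have h := tvT_mem h3
  rwa [tv_congr (bf_u_u h3) (bf_w4_self 2 3) u_decomp] at h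

lemma tv_tail_pair_mem (hg : 1 ≤ g) {k l : Fin (g+1)} (hk : 2 ≤ (k:ℕ)) (hl : 2 ≤ (l:ℕ)) :
    tv (Pi.single k 1 + Pi.single l 1) (bf_pair_self k l) ∈ HH g := by
  apply Subgroup.subset_closure
  left
  apply tv_mem_block hg _ _ (Or.inr ⟨?_, ?_⟩)
  · rw [Pi.add_apply, sne (Ne.symm (ne0_of_two_le hk)), sne (Ne.symm (ne0_of_two_le hl)),
      add_zero]
  · rw [Pi.add_apply, sne (Ne.symm (ne1_of_two_le hg hk)), sne (Ne.symm (ne1_of_two_le hg hl)),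
      add_zero]

lemma tv_vv_mem (hg : 1 ≤ g) : tv (vv g) (bf_vv_vv hg) ∈ HH g :=
  Subgroup.subset_closure (Or.inl (tv_mem_block hg _ _ (Or.inl fun k hk => vv_apply_ge hg hk)))

lemma conj_mem {a c : Fin (g+1) → ZMod 2} (ha : bf a a = 0) (hc : bf c c = 0)
    (h' : bf (a + bf a c • c) (a + bf a c • c) = 0)
    (hA : tv a ha ∈ HH g) (hC : tv c hc ∈ HH g) :
    tv (a + bf a c • c) h' ∈ HH g := by
  rw [← tv_conj a c ha hc h']
  exact mul_mem (mul_mem hC hA) hC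

lemma tv4_mem_2j (h3 : 3 ≤ g) {j : Fin (g+1)} (hj : 2 ≤ (j:ℕ)) (hj2 : j ≠ 2) :
    tv (vv g + Pi.single 2 1 + Pi.single j 1) (bf_w4_self 2 j) ∈ HH g := by
  have hg : 1 ≤ g := by omega
  have h2val : 2 ≤ ((2 : Fin (g+1)):ℕ) := by rw [val2 h3]
  have h3val : 2 ≤ ((3 : Fin (g+1)):ℕ) := by rw [val3 h3]; omega
  have h32 : (3 : Fin (g+1)) ≠ 2 := fin_ne_of_val_ne (by rw [val2 h3, val3 h3]; omega)
  by_cases hj3 : j = 3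
  · subst hj3; exact tvU_mem h3
  · have hbfac : bf (vv g + Pi.single 2 1 + Pi.single 3 1)
        (Pi.single 3 1 + Pi.single j 1) = 1 := by
      simp only [bf_add_left, bf_add_right, bf_single_left, bf_single_right, Pi.add_apply,
        vv_apply_ge hg h3val, vv_apply_ge hg hj, sse, sne (Ne.symm h32), sne h32,
        sne hj2, sne (Ne.symm hj2), sne hj3, sne (Ne.symm hj3)]
      decide
    have hvec : vv g + Pi.single 2 1 + Pi.single 3 1 +
        bf (vv g + Pi.single 2 1 + Pi.single 3 1) (Pi.single 3 1 + Pi.single j 1) •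
          (Pi.single 3 1 + Pi.single j 1) = vv g + Pi.single 2 1 + Pi.single j 1 := by
      rw [hbfac, one_smul]
      funext k
      simp only [Pi.add_apply]
      generalize vv g k = P
      generalize (Pi.single 2 1 : Fin (g+1) → ZMod 2) k = Q
      generalize (Pi.single 3 1 : Fin (g+1) → ZMod 2) k = R
      generalize (Pi.single j 1 : Fin (g+1) → ZMod 2) k = S
      revert P Q R S; decide
    have hmem := conj_mem (bf_w4_self 2 3) (bf_pair_self 3 j)
      (by rw [hvec]; exact bf_w4_self 2 j) (tvU_mem h3) (tv_tail_pair_mem hg h3val hj)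
    rwa [tv_congr _ (bf_w4_self 2 j) hvec] at hmem

lemma tv4_mem (hg : 1 ≤ g) {i j : Fin (g+1)} (hi : 2 ≤ (i:ℕ)) (hj : 2 ≤ (j:ℕ)) (hij : i ≠ j) :
    tv (vv g + Pi.single i 1 + Pi.single j 1) (bf_w4_self i j) ∈ HH g := by
  have h3 : 3 ≤ g := by
    have hi' := i.isLt
    have hj' := j.isLt
    have hne : (i:ℕ) ≠ (j:ℕ) := fun h => hij (Fin.ext h)
    omega
  have h2val : 2 ≤ ((2 : Fin (g+1)):ℕ) := by rw [val2 h3]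
  by_cases hi2 : i = 2
  · subst hi2; exact tv4_mem_2j h3 hj (Ne.symm hij)
  · by_cases hj2 : j = 2
    · subst hj2
      have h := tv4_mem_2j h3 hi hi2
      rwa [tv_congr _ (bf_w4_self i 2) (by abel)] at h
    · have h := tv4_mem_2j h3 hj hj2
      have hbfac : bf (vv g + Pi.single 2 1 + Pi.single j 1)
          (Pi.single 2 1 + Pi.single i 1) = 1 := by
        simp only [bf_add_left, bf_add_right, bf_single_left, bf_single_right, Pi.add_apply,
          vv_apply_ge hg h2val, vv_apply_ge hg hi, vv_apply_ge hg hj, sse,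
          sne hi2, sne (Ne.symm hi2), sne hj2, sne (Ne.symm hj2), sne hij, sne (Ne.symm hij)]
        decide
      have hvec : vv g + Pi.single 2 1 + Pi.single j 1 +
          bf (vv g + Pi.single 2 1 + Pi.single j 1) (Pi.single 2 1 + Pi.single i 1) •
            (Pi.single 2 1 + Pi.single i 1) = vv g + Pi.single i 1 + Pi.single j 1 := by
        rw [hbfac, one_smul]
        funext k
        simp only [Pi.add_apply]
        generalize vv g k = P
        generalize (Pi.single 2 1 : Fin (g+1) → ZMod 2) k = Q
        generalize (Pi.single j 1 : Fin (g+1) → ZMod 2) k = R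
        generalize (Pi.single i 1 : Fin (g+1) → ZMod 2) k = S
        revert P Q R S; decide
      have hmem := conj_mem (bf_w4_self 2 j) (bf_pair_self 2 i)
        (by rw [hvec]; exact bf_w4_self i j) h (tv_tail_pair_mem hg h2val hi)
      rwa [tv_congr _ (bf_w4_self i j) hvec] at hmem


lemma sum_split (hg : 1 ≤ g) (f : Fin (g+1) → ZMod 2) :
    ∑ k, f k = f 0 + f 1 + ∑ k ∈ Finset.filter (fun k : Fin (g+1) => 2 ≤ (k:ℕ)) Finset.univ, f k := by
  have h1mem : (1 : Fin (g+1)) ∉ Finset.filter (fun k : Fin (g+1) => 2 ≤ (k:ℕ)) Finset.univ := by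
    simp only [Finset.mem_filter, Finset.mem_univ, true_and, not_le, val1 hg]
    omega
  have h0mem : (0 : Fin (g+1)) ∉
      insert 1 (Finset.filter (fun k : Fin (g+1) => 2 ≤ (k:ℕ)) Finset.univ) := by
    simp [zero_ne_one' hg]
  have huniv : (Finset.univ : Finset (Fin (g+1))) =
      insert 0 (insert 1 (Finset.filter (fun k : Fin (g+1) => 2 ≤ (k:ℕ)) Finset.univ)) := by
    ext k
    simp only [Finset.mem_univ, Finset.mem_insert, Finset.mem_filter, true_and, true_iff]
    rcases fin_cases3 hg k with rfl | rfl | h2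
    · exact Or.inl rfl
    · exact Or.inr (Or.inl rfl)
    · exact Or.inr (Or.inr h2)
  conv_lhs => rw [huniv]
  rw [Finset.sum_insert h0mem, Finset.sum_insert h1mem, add_assoc]

lemma reduce (hg : 1 ≤ g) : ∀ n : ℕ, ∀ w : Fin (g+1) → ZMod 2,
    bf w w = 1 → w 0 = 1 → w 1 = 0 →
    (Finset.filter (fun k : Fin (g+1) => 2 ≤ (k:ℕ) ∧ w k ≠ 0) Finset.univ).card = n →
    ∃ G ∈ HH g, G w = Pi.single 0 1 := by
  intro n
  induction n using Nat.strong_induction_on with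
  | _ n IH =>
    intro w hww hw0 hw1 hcard
    by_cases hS : (Finset.filter (fun k : Fin (g+1) => 2 ≤ (k:ℕ) ∧ w k ≠ 0) Finset.univ) = ∅
    · refine ⟨1, one_mem _, ?_⟩
      show w = Pi.single 0 1
      funext k
      rcases fin_cases3 hg k with rfl | rfl | hk2
      · rw [hw0, sse]
      · rw [hw1, sne (Ne.symm (zero_ne_one' hg))]
      · have hk0 : w k = 0 := by
          by_contra hne
          have : k ∈ Finset.filter (fun k : Fin (g+1) => 2 ≤ (k:ℕ) ∧ w k ≠ 0) Finset.univ :=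
            Finset.mem_filter.mpr ⟨Finset.mem_univ k, hk2, hne⟩
          rw [hS] at this
          simp at this
        rw [hk0, sne (ne0_of_two_le hk2)]
    · -- the tail support is nonempty, hence has at least two elements
      have hsum : (n : ZMod 2) = 0 := by
        have hsplit := sum_split hg w
        rw [bf_self] at hww
        rw [hww, hw0, hw1] at hsplit
        have hsub : ∑ k ∈ Finset.filter (fun k : Fin (g+1) => 2 ≤ (k:ℕ)) Finset.univ, w k
            = ∑ k ∈ Finset.filter (fun k : Fin (g+1) => 2 ≤ (k:ℕ) ∧ w k ≠ 0) Finset.univ, w k := by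
          apply (Finset.sum_subset ?_ ?_).symm
          · intro k hk
            simp only [Finset.mem_filter] at hk ⊢
            exact ⟨hk.1, hk.2.1⟩
          · intro k hk hnk
            simp only [Finset.mem_filter] at hk hnk
            by_contra hne
            exact hnk ⟨hk.1, hk.2, hne⟩
        rw [hsub] at hsplit
        have hones : ∑ k ∈ Finset.filter (fun k : Fin (g+1) => 2 ≤ (k:ℕ) ∧ w k ≠ 0) Finset.univ, w k
            = (n : ZMod 2) := by
          rw [Finset.sum_congr rfl (fun k hk => zmod2_ne_zero (Finset.mem_filter.mp hk).2.2),
            Finset.sum_const, ← hcard, nsmul_eq_mul, mul_one]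
        rw [hones] at hsplit
        revert hsplit
        generalize (n : ZMod 2) = A
        revert A; decide
      have hdvd : 2 ∣ n := (CharP.cast_eq_zero_iff (ZMod 2) 2 n).mp hsum
      have hn0 : n ≠ 0 := by
        intro h
        rw [h, Finset.card_eq_zero] at hcard
        exact hS hcard
      have hlt : 1 < (Finset.filter (fun k : Fin (g+1) => 2 ≤ (k:ℕ) ∧ w k ≠ 0) Finset.univ).card := by
        omega
      obtain ⟨i, hi, j, hj, hij⟩ := Finset.one_lt_card.mp hlt
      obtain ⟨_, hi2, hwi⟩ := Finset.mem_filter.mp hi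
      obtain ⟨_, hj2, hwj⟩ := Finset.mem_filter.mp hj
      have hwi1 : w i = 1 := zmod2_ne_zero hwi
      have hwj1 : w j = 1 := zmod2_ne_zero hwj
      have hi0 : i ≠ 0 := ne0_of_two_le hi2
      have hi1 : i ≠ 1 := ne1_of_two_le hg hi2
      have hj0 : j ≠ 0 := ne0_of_two_le hj2
      have hj1 : j ≠ 1 := ne1_of_two_le hg hj2
      -- the two transvections
      have hbfwa : bf w (vv g + Pi.single i 1 + Pi.single j 1) = 1 := by
        rw [bf_add_right, bf_add_right, bf_vv_right, bf_single_right, bf_single_right,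
          hw0, hw1, hwi1, hwj1]
        decide
      set w' := w + Pi.single i 1 + Pi.single j 1 with hw'def
      have hbfa_vv : bf (w + (vv g + Pi.single i 1 + Pi.single j 1)) (vv g) = 1 := by
        simp only [bf_vv_right, Pi.add_apply]
        rw [hw0, hw1, vv_apply0 hg, vv_apply1 hg, sne (Ne.symm hi0), sne (Ne.symm hi1),
          sne (Ne.symm hj0), sne (Ne.symm hj1)]
        decide
      have happ : (tv (vv g) (bf_vv_vv hg) * tv (vv g + Pi.single i 1 + Pi.single j 1)
          (bf_w4_self i j)) w = w' := by
        show tv (vv g) (bf_vv_vv hg) (tv (vv g + Pi.single i 1 + Pi.single j 1)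
          (bf_w4_self i j) w) = w'
        rw [tv_apply, tv_apply, hbfwa, one_smul, hbfa_vv, one_smul, hw'def]
        funext k
        simp only [Pi.add_apply]
        generalize w k = P
        generalize vv g k = Q
        generalize (Pi.single i 1 : Fin (g+1) → ZMod 2) k = R
        generalize (Pi.single j 1 : Fin (g+1) → ZMod 2) k = S
        revert P Q R S; decide
      set K := tv (vv g) (bf_vv_vv hg) * tv (vv g + Pi.single i 1 + Pi.single j 1)
          (bf_w4_self i j) with hKdef
      have hKmem : K ∈ HH g := mul_mem (tv_vv_mem hg) (tv4_mem hg hi2 hj2 hij)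
      -- properties of w'
      have hw'i : w' i = 0 := by
        rw [hw'def, Pi.add_apply, Pi.add_apply, hwi1, sse, sne hij]
        decide
      have hw'j : w' j = 0 := by
        rw [hw'def, Pi.add_apply, Pi.add_apply, hwj1, sse, sne (Ne.symm hij)]
        decide
      have hw'k : ∀ k, k ≠ i → k ≠ j → w' k = w k := by
        intro k hki hkj
        rw [hw'def, Pi.add_apply, Pi.add_apply, sne hki, sne hkj, add_zero, add_zero]
      have hw'0 : w' 0 = 1 := by rw [hw'k 0 (Ne.symm hi0) (Ne.symm hj0)]; exact hw0
      have hw'1 : w' 1 = 0 := by rw [hw'k 1 (Ne.symm hi1) (Ne.symm hj1)]; exact hw1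
      have hbfw' : bf w' w' = 1 := by
        have horthK := (mem_orth_iff K).mp ((hh_le_stab hg hKmem).1)
        have h := horthK w w
        rw [happ] at h
        rw [h]; exact hww
      have hSset : Finset.filter (fun k : Fin (g+1) => 2 ≤ (k:ℕ) ∧ w' k ≠ 0) Finset.univ
          = (Finset.filter (fun k : Fin (g+1) => 2 ≤ (k:ℕ) ∧ w k ≠ 0) Finset.univ) \ {i, j} := by
        ext k
        simp only [Finset.mem_filter, Finset.mem_sdiff, Finset.mem_insert,
          Finset.mem_singleton, Finset.mem_univ, true_and]
        constructor
        · rintro ⟨hk2, hkne⟩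
          by_cases hki : k = i
          · subst hki; rw [hw'i] at hkne; exact absurd rfl hkne
          · by_cases hkj : k = j
            · subst hkj; rw [hw'j] at hkne; exact absurd rfl hkne
            · rw [hw'k k hki hkj] at hkne
              exact ⟨⟨hk2, hkne⟩, by tauto⟩
        · rintro ⟨⟨hk2, hkne⟩, hnot⟩
          push_neg at hnot
          rw [← hw'k k hnot.1 hnot.2] at hkne
          exact ⟨hk2, hkne⟩
      have hsubset : {i, j} ⊆ Finset.filter (fun k : Fin (g+1) => 2 ≤ (k:ℕ) ∧ w k ≠ 0) Finset.univ := by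
        intro k hk
        simp only [Finset.mem_insert, Finset.mem_singleton] at hk
        rcases hk with rfl | rfl
        · exact hi
        · exact hj
      have hcard2 : ({i, j} : Finset (Fin (g+1))).card = 2 := by
        rw [Finset.card_insert_of_notMem (by simp [hij]), Finset.card_singleton]
      have hcard' : (Finset.filter (fun k : Fin (g+1) => 2 ≤ (k:ℕ) ∧ w' k ≠ 0) Finset.univ).card
          = n - 2 := by
        rw [hSset, Finset.card_sdiff_of_subset hsubset, hcard2, hcard]
      obtain ⟨G3, hG3mem, hG3⟩ := IH (n - 2) (by omega) w' hbfw' hw'0 hw'1 hcard'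
      refine ⟨G3 * K, mul_mem hG3mem hKmem, ?_⟩
      show G3 (K w) = Pi.single 0 1
      rw [happ, hG3]


lemma stab_subset_hh (hg : 1 ≤ g) {F : (Fin (g+1) → ZMod 2) ≃ₗ[ZMod 2] (Fin (g+1) → ZMod 2)}
    (hO : F ∈ OrthGroup (g+1)) (hFv : F (vv g) = vv g) : F ∈ HH g := by
  have horth : ∀ x y, bf (F x) (F y) = bf x y := (mem_orth_iff F).mp hO
  have hww : bf (F (Pi.single 0 1)) (F (Pi.single 0 1)) = 1 := by
    rw [horth, bf_single_left, sse]
  have hwv : F (Pi.single 0 1) 0 + F (Pi.single 0 1) 1 = 1 := by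
    have h1 := horth (Pi.single 0 1) (vv g)
    rw [hFv, bf_vv_right, bf_single_left, vv_apply0 hg] at h1
    exact h1
  have hkey : ∃ G ∈ HH g, G (F (Pi.single 0 1)) = Pi.single 0 1 := by
    by_cases hw1 : F (Pi.single 0 1) 1 = 0
    · have hw0 : F (Pi.single 0 1) 0 = 1 := by
        rw [hw1, add_zero] at hwv; exact hwv
      exact reduce hg _ _ hww hw0 hw1 rfl
    · have hw1' : F (Pi.single 0 1) 1 = 1 := zmod2_ne_zero hw1
      have hw0 : F (Pi.single 0 1) 0 = 0 := by
        rw [hw1'] at hwv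
        revert hwv
        generalize F (Pi.single 0 1) 0 = A
        revert A; decide
      have hbfwv : bf (F (Pi.single 0 1)) (vv g) = 1 := by
        rw [bf_vv_right, hw0, hw1']; decide
      have happ : tv (vv g) (bf_vv_vv hg) (F (Pi.single 0 1)) = F (Pi.single 0 1) + vv g := by
        rw [tv_apply, hbfwv, one_smul]
      have hw20 : (F (Pi.single 0 1) + vv g) 0 = 1 := by
        rw [Pi.add_apply, hw0, vv_apply0 hg]; decide
      have hw21 : (F (Pi.single 0 1) + vv g) 1 = 0 := by
        rw [Pi.add_apply, hw1', vv_apply1 hg]; decide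
      have hbfw2 : bf (F (Pi.single 0 1) + vv g) (F (Pi.single 0 1) + vv g) = 1 := by
        have horthK := (mem_orth_iff _).mp (tv_mem_orth (vv g) (bf_vv_vv hg))
        have h := horthK (F (Pi.single 0 1)) (F (Pi.single 0 1))
        rw [happ] at h
        rw [h]; exact hww
      obtain ⟨G0, hG0mem, hG0⟩ := reduce hg _ _ hbfw2 hw20 hw21 rfl
      refine ⟨G0 * tv (vv g) (bf_vv_vv hg), mul_mem hG0mem (tv_vv_mem hg), ?_⟩
      show G0 (tv (vv g) (bf_vv_vv hg) (F (Pi.single 0 1))) = Pi.single 0 1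
      rw [happ, hG0]
  obtain ⟨G, hGmem, hGw⟩ := hkey
  have hGstab := hh_le_stab hg hGmem
  have hF'orth : G * F ∈ OrthGroup (g+1) := mul_mem hGstab.1 hO
  have hF'e0 : (G * F) (Pi.single 0 1) = Pi.single 0 1 := hGw
  have hF'vv : (G * F) (vv g) = vv g := by
    show G (F (vv g)) = vv g
    rw [hFv, hGstab.2]
  have hF'e1 : (G * F) (Pi.single 1 1) = Pi.single 1 1 := by
    have hdecomp : (G * F) (vv g) = (G * F) (Pi.single 0 1) + (G * F) (Pi.single 1 1) := by
      show (G * F) (Pi.single 0 1 + Pi.single 1 1) = _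
      rw [map_add]
    rw [hF'vv, hF'e0] at hdecomp
    have : vv g = Pi.single 0 1 + Pi.single 1 1 := rfl
    rw [this] at hdecomp
    exact (add_left_cancel hdecomp).symm
  have horthF' : ∀ x y, bf ((G * F) x) ((G * F) y) = bf x y := (mem_orth_iff _).mp hF'orth
  have hblock : G * F ∈ BlockSet g := by
    refine ⟨hF'orth, ?_, ?_⟩
    · intro x hx k hk2
      have hxdecomp : x = x 0 • (Pi.single 0 1 : Fin (g+1) → ZMod 2)
          + x 1 • (Pi.single 1 1 : Fin (g+1) → ZMod 2) := by
        funext m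
        simp only [Pi.add_apply, Pi.smul_apply, smul_eq_mul]
        rcases fin_cases3 hg m with rfl | rfl | hm2
        · rw [sse, sne (zero_ne_one' hg), mul_one, mul_zero, add_zero]
        · rw [sse, sne (Ne.symm (zero_ne_one' hg)), mul_one, mul_zero, zero_add]
        · rw [hx m hm2, sne (ne0_of_two_le hm2), sne (ne1_of_two_le hg hm2),
            mul_zero, mul_zero, add_zero]
      rw [hxdecomp, map_add, map_smul, map_smul, hF'e0, hF'e1]
      rw [Pi.add_apply, Pi.smul_apply, Pi.smul_apply, smul_eq_mul, smul_eq_mul,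
        sne (ne0_of_two_le hk2), sne (ne1_of_two_le hg hk2), mul_zero, mul_zero, add_zero]
    · intro x h0 h1
      constructor
      · have h := horthF' x (Pi.single 0 1)
        rw [hF'e0, bf_single_right, bf_single_right] at h
        rw [h, h0]
      · have h := horthF' x (Pi.single 1 1)
        rw [hF'e1, bf_single_right, bf_single_right] at h
        rw [h, h1]
  have hF'mem : G * F ∈ HH g := Subgroup.subset_closure (Or.inl hblock)
  have : F = G⁻¹ * (G * F) := by group
  rw [this]
  exact mul_mem (inv_mem hGmem) hF'mem

end StabAux

/-- For `g ≥ 1`, the isotropy subgroup `Iso_{α₀} = {F ∈ O(V) | F (e₀+e₁) = e₀+e₁}` of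
`V = Fin (g+1) → ZMod 2` is generated by the block elements of `O(Z₂²) × O(Z₂^{g-1})`
together with (when `g ≥ 3`) the transvection `T_{e₀+e₁+e₂+e₃}`: every element of
`Iso_{α₀}` is a product of these elements. -/
theorem stab_alpha0_generated (g : ℕ) (hg : 1 ≤ g) :
    {F : (Fin (g + 1) → ZMod 2) ≃ₗ[ZMod 2] (Fin (g + 1) → ZMod 2) |
        F ∈ OrthGroup (g + 1) ∧
        F (Pi.single 0 1 + Pi.single 1 1) = Pi.single 0 1 + Pi.single 1 1} =
      ↑(Subgroup.closure (BlockSet g ∪ Transvection0123 g)) := by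
  apply Set.Subset.antisymm
  · rintro F ⟨hO, hFv⟩
    exact StabAux.stab_subset_hh hg hO hFv
  · intro F hF
    have h := StabAux.hh_le_stab hg hF
    exact ⟨h.1, h.2⟩
end
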